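/- Let R be a commutative ring, S a multiplicatively closed subset of R, and M an R-module. If N is a weakly S-prime submodule of M, then for any submodule K of M with (K :_R M) ∩ S ≠ ∅, the intersection N ∩ K is a weakly S-prime submodule of M. Additionally, if M is a multiplication module, then the product N·K = (N :_R M)(K :_R M)•M is a weakly S-prime submodule of M. -/

import Mathlib

/-- A submodule `N` of an `R`-module `M` is *weakly `S`-prime* (for a multiplicatively
closed subset `S ⊆ R`) if `(N :_R M) ∩ S = ∅` and there exists `s ∈ S` such that for all
`a ∈ R` and `m ∈ M` with `0 ≠ a • m ∈ N`, either `s * a ∈ (N :_R M)` or `s • m ∈ N`. -/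
def IsWeaklySPrime {R M : Type*} [CommRing R] [AddCommGroup M] [Module R M]
    (S : Set R) (N : Submodule R M) : Prop :=
  ((N.colon ⊤ : Set R) ∩ S = ∅) ∧
    ∃ s ∈ S, ∀ (a : R) (m : M), a • m ∈ N → a • m ≠ 0 →
      s * a ∈ N.colon ⊤ ∨ s • m ∈ N

/-- The product of two submodules `N`, `K` of a multiplication module `M`:
`N·K = (N :_R M)(K :_R M)•M`. -/
def submoduleProd {R M : Type*} [CommRing R] [AddCommGroup M] [Module R M]
    (N K : Submodule R M) : Submodule R M :=
  (N.colon ⊤ * K.colon ⊤) • (⊤ : Submodule R M)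

/-- If `t ∈ J` and `x ∈ I • ⊤`, then `t • x ∈ (I * J) • ⊤`. -/
lemma smul_mem_mul_smul_top {R M : Type*} [CommRing R] [AddCommGroup M] [Module R M]
    (I J : Ideal R) {t : R} (ht : t ∈ J) {x : M} (hx : x ∈ I • (⊤ : Submodule R M)) :
    t • x ∈ (I * J) • (⊤ : Submodule R M) := by
  refine Submodule.smul_induction_on hx (fun r hr m _ => ?_) (fun x y hx' hy' => ?_)
  · rw [smul_smul, mul_comm t r]
    exact Submodule.smul_mem_smul (Ideal.mul_mem_mul hr ht) trivial
  · rw [smul_add]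
    exact Submodule.add_mem _ hx' hy'

theorem stmt18 {R M : Type*} [CommRing R] [Nontrivial R] [AddCommGroup M] [Module R M]
    (S : Set R) (hS : ∀ a ∈ S, ∀ b ∈ S, a * b ∈ S)
    (N : Submodule R M) (hN : IsWeaklySPrime S N)
    (K : Submodule R M) (hK : ((K.colon ⊤ : Set R) ∩ S).Nonempty) :
    IsWeaklySPrime S (N ⊓ K) ∧
      ((∀ P : Submodule R M, ∃ I : Ideal R, P = I • (⊤ : Submodule R M)) →
        IsWeaklySPrime S (submoduleProd N K)) := by
  obtain ⟨hdisj, s, hsS, hs⟩ := hN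
  obtain ⟨t, htK, htS⟩ := hK
  have htK' : ∀ m : M, t • m ∈ K := fun m => Submodule.mem_colon.mp htK m trivial
  have hstS : s * t ∈ S := hS s hsS t htS
  -- disjointness transfers along `P ≤ N`
  have key : ∀ P : Submodule R M, P ≤ N → ((P.colon ⊤ : Set R) ∩ S = ∅) := by
    intro P hPN
    rw [Set.eq_empty_iff_forall_notMem] at hdisj ⊢
    rintro x ⟨hx1, hx2⟩
    exact hdisj x ⟨Submodule.mem_colon.mpr
      (fun m hm => hPN (Submodule.mem_colon.mp hx1 m hm)), hx2⟩
  constructor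
  · refine ⟨key _ inf_le_left, s * t, hstS, fun a m ham hne => ?_⟩
    rcases hs a m ham.1 hne with h | h
    · left
      rw [Submodule.mem_colon]
      intro x _
      have h1 : (s * a) • x ∈ N := Submodule.mem_colon.mp h x trivial
      rw [show s * t * a = t * (s * a) by ring, mul_smul]
      exact ⟨N.smul_mem t h1, htK' _⟩
    · right
      refine ⟨?_, ?_⟩
      · rw [mul_comm s t, mul_smul]
        exact N.smul_mem t h
      · rw [mul_smul]
        exact K.smul_mem s (htK' m)
  · intro hmul
    have hPN : submoduleProd N K ≤ N := by
      refine le_trans (Submodule.smul_mono_left Ideal.mul_le_left) ?_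
      rw [Submodule.smul_le]
      intro r hr n _
      exact Submodule.mem_colon.mp hr n trivial
    have hNle : N ≤ (N.colon ⊤) • (⊤ : Submodule R M) := by
      obtain ⟨I, hI⟩ := hmul N
      have hIle : I ≤ N.colon ⊤ := by
        intro r hr
        exact Submodule.mem_colon.mpr fun m _ => hI ▸ Submodule.smul_mem_smul hr trivial
      nth_rewrite 1 [hI]
      exact Submodule.smul_mono_left hIle
    refine ⟨key _ hPN, s * t, hstS, fun a m ham hne => ?_⟩
    rcases hs a m (hPN ham) hne with h | h
    · left
      rw [Submodule.mem_colon]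
      intro x _
      have h1 : (s * a) • x ∈ (N.colon ⊤) • (⊤ : Submodule R M) :=
        Submodule.smul_mem_smul h trivial
      rw [show s * t * a = t * (s * a) by ring, mul_smul]
      exact smul_mem_mul_smul_top _ _ htK h1
    · right
      have h1 : s • m ∈ (N.colon ⊤) • (⊤ : Submodule R M) := hNle h
      have e : (s * t) • m = t • (s • m) := by rw [mul_comm, mul_smul]
      simp only [submoduleProd]
      rw [e]
      exact smul_mem_mul_smul_top (N.colon ⊤) (K.colon ⊤) htK h1
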